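/- Let n ≥ 14 be an even integer. For every 0 ≤ j ≤ n−1, the line L_j contains at least ⌊n/3⌋ + 1 points of ℬ_n; that is, the finite set ℬ_n ∩ L_j has cardinality at least ⌊n/3⌋ + 1. -/

import Mathlib

/-!
With `ζ = exp(2πi/n)` we have `P_j = ζ^j` and `Q_j = -ζ^{-2j}`, and for `P`, `Q` on the unit
circle the line through them (the tangent at `P` if `P = Q`) is `z + P Q z̄ = P + Q`. Hence if
`a + b + c ≡ 0 (mod n)`, the point `ζ^a + ζ^b + ζ^c` lies on `L_a`, `L_b` and `L_c`.

Fix `j` and let `l ≡ -j - k (mod n)`. All but at most four `k` (`k = j`, `l = j`, and the at most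
two solutions of `2k ≡ -j`) make `j, k, l` distinct, giving a triple point on `L_j`. The point
determines the sum of `ζ^k` and `ζ^l`, and their product is `ζ^{-j}`, so each point comes from at
most two values of `k`: `L_j` carries at least `⌈(n - 4)/2⌉ ≥ ⌊n/3⌋ + 1` triple points.
Finiteness holds because distinct lines meet at most once.
-/

open Complex

/-- `P n j = exp(2πij/n)`. -/
noncomputable def Ppt (n j : ℕ) : ℂ := Complex.exp (2 * Real.pi * Complex.I * j / n)

/-- `Q n j = -exp(-4πij/n)`. -/
noncomputable def Qpt (n j : ℕ) : ℂ := -Complex.exp (-(4 * Real.pi * Complex.I * j) / n)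

open scoped Classical in
/-- The `j`-th line of the Böröczky configuration: the line through `P n j` and
`Q n j` if they are distinct, and the tangent line to the unit circle at `P n j`
otherwise (identifying ℝ² with ℂ). -/
noncomputable def Bline (n j : ℕ) : Set ℂ :=
  if Ppt n j = Qpt n j then
    {z : ℂ | (z * (starRingEnd ℂ) (Ppt n j)).re = 1}
  else
    {z : ℂ | ((z - Ppt n j) * (starRingEnd ℂ) (Qpt n j - Ppt n j)).im = 0}

/-- The set of triple points of the Böröczky configuration: points lying on at
least three of the lines `L_0, …, L_{n-1}`. -/
def TriplePts (n : ℕ) : Set ℂ :=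
  {z : ℂ | 3 ≤ ({j : ℕ | j < n ∧ z ∈ Bline n j} : Set ℕ).ncard}

open ComplexConjugate

/-- For `P`, `Q` on the unit circle this is the line through `P` and `Q` (the tangent at `P` if
`P = Q`). -/
def chordLine (P Q : ℂ) : Set ℂ := {z | z + P * Q * conj z = P + Q}

section chordLine

variable {P Q : ℂ}

theorem setOf_re_mul_conj_eq_one (hP : ‖P‖ = 1) :
    {z : ℂ | (z * conj P).re = 1} = chordLine P P := by
  have hP0 : P ≠ 0 := norm_ne_zero_iff.mp (by simp [hP])
  ext z
  have key : z * P⁻¹ + conj (z * P⁻¹) = 2 ↔ z + P * P * conj z = P + P := by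
    rw [map_mul, map_inv₀, ← inv_eq_conj hP, inv_inv]
    constructor <;> intro h
    · field_simp at h
      linear_combination h
    · field_simp
      linear_combination h
  rw [Set.mem_ofPred_eq, chordLine, Set.mem_ofPred_eq, ← key, add_conj, inv_eq_conj hP]
  norm_cast
  constructor <;> intro h <;> linarith

theorem setOf_im_mul_conj_sub_eq_zero (hP : ‖P‖ = 1) (hQ : ‖Q‖ = 1) (hPQ : P ≠ Q) :
    {z : ℂ | ((z - P) * conj (Q - P)).im = 0} = chordLine P Q := by
  have hP0 : P ≠ 0 := norm_ne_zero_iff.mp (by simp [hP])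
  have hQ0 : Q ≠ 0 := norm_ne_zero_iff.mp (by simp [hQ])
  ext z
  have key : conj ((z - P) * conj (Q - P)) - (z - P) * conj (Q - P) =
      (Q - P) / (P * Q) * (z + P * Q * conj z - (P + Q)) := by
    rw [map_mul, conj_conj, map_sub, map_sub, ← inv_eq_conj hP, ← inv_eq_conj hQ]
    field_simp
    ring
  rw [Set.mem_ofPred_eq, chordLine, Set.mem_ofPred_eq, ← conj_eq_iff_im, ← sub_eq_zero, key]
  simp [sub_eq_zero, hP0, hQ0, Ne.symm hPQ]

theorem chordLine_inter_subsingleton {P' Q' : ℂ} (h : P * Q ≠ P' * Q') :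
    (chordLine P Q ∩ chordLine P' Q').Subsingleton := by
  rintro z ⟨hz, hz'⟩ w ⟨hw, hw'⟩
  simp only [chordLine, Set.mem_ofPred_eq] at hz hz' hw hw'
  have : (P * Q - P' * Q') * conj (z - w) = 0 := by
    rw [map_sub]
    linear_combination hz - hw - hz' + hw'
  rw [mul_eq_zero, map_eq_zero, sub_eq_zero, sub_eq_zero] at this
  exact this.resolve_left h

theorem add_add_mem_chordLine {u v w : ℂ} (hu : ‖u‖ = 1) (hv : ‖v‖ = 1) (hw : ‖w‖ = 1)
    (h : u * v * w = 1) : u + v + w ∈ chordLine u (-(u ^ 2)⁻¹) := by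
  have hu0 : u ≠ 0 := norm_ne_zero_iff.mp (by simp [hu])
  have hv : conj v = u * w := by
    rw [← inv_eq_conj hv]; exact inv_eq_of_mul_eq_one_left (by linear_combination h)
  have hw : conj w = u * v := by
    rw [← inv_eq_conj hw]; exact inv_eq_of_mul_eq_one_left (by linear_combination h)
  rw [chordLine, Set.mem_ofPred_eq, map_add, map_add, hv, hw, ← inv_eq_conj hu]
  field_simp
  ring

end chordLine

namespace Boroczky

noncomputable def zeta (n : ℕ) : ℂ := exp (2 * Real.pi * I / n)

theorem Ppt_eq_zeta_pow (n j : ℕ) : Ppt n j = zeta n ^ j := by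
  rw [Ppt, zeta, ← exp_nat_mul]
  ring_nf

theorem Qpt_eq_zeta_pow (n j : ℕ) : Qpt n j = -((zeta n ^ j) ^ 2)⁻¹ := by
  rw [Qpt, zeta, ← exp_nat_mul, ← exp_nat_mul, ← exp_neg]
  ring_nf

def third (n j k : ℕ) : ℕ := (-(j + k : ZMod n)).val

noncomputable def boroczkyPoint (n j k : ℕ) : ℂ :=
  zeta n ^ j + zeta n ^ k + zeta n ^ third n j k

def admissibleIndices (n j : ℕ) : Finset ℕ :=
  (Finset.range n).filter fun k ↦ k ≠ j ∧ third n j k ≠ j ∧ third n j k ≠ k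

@[simp]
theorem mem_admissibleIndices {n j k : ℕ} :
    k ∈ admissibleIndices n j ↔ k < n ∧ k ≠ j ∧ third n j k ≠ j ∧ third n j k ≠ k := by
  rw [admissibleIndices, Finset.mem_filter, Finset.mem_range]

variable {n : ℕ} [NeZero n]

theorem isPrimitiveRoot_zeta : IsPrimitiveRoot (zeta n) n :=
  isPrimitiveRoot_exp n (NeZero.ne n)

theorem norm_zeta_pow (k : ℕ) : ‖zeta n ^ k‖ = 1 := by
  rw [norm_pow, isPrimitiveRoot_zeta.norm'_eq_one (NeZero.ne n), one_pow]

theorem Bline_eq_chordLine (j : ℕ) : Bline n j = chordLine (Ppt n j) (Qpt n j) := by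
  have hP : ‖Ppt n j‖ = 1 := by rw [Ppt_eq_zeta_pow, norm_zeta_pow]
  have hQ : ‖Qpt n j‖ = 1 := by
    rw [Qpt_eq_zeta_pow, norm_neg, norm_inv, norm_pow, norm_zeta_pow, one_pow, inv_one]
  rw [Bline]
  split_ifs with h
  · rw [setOf_re_mul_conj_eq_one hP, ← h]
  · exact setOf_im_mul_conj_sub_eq_zero hP hQ h

theorem Bline_inter_subsingleton {i j : ℕ} (hi : i < n) (hj : j < n) (hij : i ≠ j) :
    (Bline n i ∩ Bline n j).Subsingleton := by
  have hPQ (k : ℕ) : Ppt n k * Qpt n k = -(zeta n ^ k)⁻¹ := by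
    have : zeta n ^ k ≠ 0 := pow_ne_zero _ (isPrimitiveRoot_zeta.ne_zero (NeZero.ne n))
    rw [Ppt_eq_zeta_pow, Qpt_eq_zeta_pow]
    field_simp
  rw [Bline_eq_chordLine, Bline_eq_chordLine]
  refine chordLine_inter_subsingleton ?_
  rw [hPQ, hPQ, Ne, neg_inj, inv_inj]
  exact mt (isPrimitiveRoot_zeta.pow_inj hi hj) hij

theorem zeta_pow_add_add_mem_Bline {a b c : ℕ} (h : n ∣ a + b + c) :
    zeta n ^ a + zeta n ^ b + zeta n ^ c ∈ Bline n a := by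
  rw [Bline_eq_chordLine, Ppt_eq_zeta_pow, Qpt_eq_zeta_pow]
  refine add_add_mem_chordLine (norm_zeta_pow a) (norm_zeta_pow b) (norm_zeta_pow c) ?_
  rwa [← pow_add, ← pow_add, isPrimitiveRoot_zeta.pow_eq_one_iff_dvd]

theorem third_lt (j k : ℕ) : third n j k < n := ZMod.val_lt _

theorem third_eq_iff {j k l : ℕ} (hl : l < n) : third n j k = l ↔ n ∣ j + k + l := by
  rw [third, (ZMod.val_injective n).eq_iff' (ZMod.val_natCast_of_lt hl), neg_eq_iff_add_eq_zero,
    ← ZMod.natCast_eq_zero_iff]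
  norm_cast

theorem dvd_add_add_third (j k : ℕ) : n ∣ j + k + third n j k :=
  (third_eq_iff (third_lt j k)).mp rfl

theorem zeta_pow_mul_pow_mul_pow_third (j k : ℕ) :
    zeta n ^ j * zeta n ^ k * zeta n ^ third n j k = 1 := by
  rw [← pow_add, ← pow_add, isPrimitiveRoot_zeta.pow_eq_one_iff_dvd]
  exact dvd_add_add_third j k

theorem card_filter_third_eq_self_le_two (j : ℕ) :
    ((Finset.range n).filter fun k ↦ third n j k = k).card ≤ 2 := by
  classical
  calc _ ≤ (Polynomial.nthRootsFinset 2 (zeta n ^ j)⁻¹).card := by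
        refine Finset.card_le_card_of_injOn (zeta n ^ ·) (fun k hk ↦ ?_) fun k hk k' hk' h ↦ ?_
        · rw [Finset.mem_coe, Finset.mem_filter] at hk
          have := zeta_pow_mul_pow_mul_pow_third (n := n) j k
          rw [hk.2] at this
          rw [Finset.mem_coe, Polynomial.mem_nthRootsFinset two_pos]
          exact eq_inv_of_mul_eq_one_left (by linear_combination this)
        · simp only [Finset.coe_filter, Finset.mem_range, Set.mem_ofPred_eq] at hk hk'
          exact isPrimitiveRoot_zeta.pow_inj hk.1 hk'.1 h
    _ ≤ 2 := by
        rw [Polynomial.nthRootsFinset_def]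
        exact (Multiset.toFinset_card_le _).trans (Polynomial.card_nthRoots 2 _)

theorem boroczkyPoint_mem_Bline (j k : ℕ) : boroczkyPoint n j k ∈ Bline n j :=
  zeta_pow_add_add_mem_Bline (dvd_add_add_third j k)

theorem boroczkyPoint_mem_TriplePts {j k : ℕ} (hj : j < n) (hk : k < n) (hkj : k ≠ j)
    (hlj : third n j k ≠ j) (hlk : third n j k ≠ k) : boroczkyPoint n j k ∈ TriplePts n := by
  have hdvd := dvd_add_add_third (n := n) j k
  have hk_mem : boroczkyPoint n j k ∈ Bline n k := by
    rw [boroczkyPoint, add_comm (zeta n ^ j)]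
    exact zeta_pow_add_add_mem_Bline (by rwa [Nat.add_comm k])
  have hl_mem : boroczkyPoint n j k ∈ Bline n (third n j k) := by
    rw [boroczkyPoint, ← add_rotate]
    exact zeta_pow_add_add_mem_Bline (by rwa [← add_rotate] at hdvd)
  have hfin : {i | i < n ∧ boroczkyPoint n j k ∈ Bline n i}.Finite :=
    (Set.finite_Iio n).subset fun i hi ↦ hi.1
  exact (Set.two_lt_ncard_iff hfin).mpr ⟨j, k, third n j k, ⟨hj, boroczkyPoint_mem_Bline j k⟩,
    ⟨hk, hk_mem⟩, ⟨third_lt j k, hl_mem⟩, hkj.symm, hlj.symm, hlk.symm⟩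

theorem eq_or_eq_third_of_boroczkyPoint_eq {j k₁ k₂ : ℕ} (hk₁ : k₁ < n) (hk₂ : k₂ < n)
    (h : boroczkyPoint n j k₁ = boroczkyPoint n j k₂) : k₁ = k₂ ∨ k₁ = third n j k₂ := by
  have hprod : zeta n ^ k₁ * zeta n ^ third n j k₁ = zeta n ^ k₂ * zeta n ^ third n j k₂ := by
    refine mul_left_cancel₀ (pow_ne_zero j (isPrimitiveRoot_zeta.ne_zero (NeZero.ne n))) ?_
    rw [← mul_assoc, ← mul_assoc, zeta_pow_mul_pow_mul_pow_third,
      zeta_pow_mul_pow_mul_pow_third]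
  -- with `lᵢ = third n j kᵢ`, the pairs `ζ^kᵢ, ζ^lᵢ` have equal sums and equal products, so
  -- `ζ^k₁` is a root of `(X - ζ^k₂) (X - ζ^l₂)`
  have hroot : (zeta n ^ k₁ - zeta n ^ k₂) * (zeta n ^ k₁ - zeta n ^ third n j k₂) = 0 := by
    rw [boroczkyPoint, boroczkyPoint] at h
    linear_combination zeta n ^ k₁ * h - hprod
  rcases mul_eq_zero.mp hroot with h | h
  · exact .inl (isPrimitiveRoot_zeta.pow_inj hk₁ hk₂ (sub_eq_zero.mp h))
  · exact .inr (isPrimitiveRoot_zeta.pow_inj hk₁ (third_lt j k₂) (sub_eq_zero.mp h))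

theorem le_card_admissibleIndices_add_four {j : ℕ} (hj : j < n) :
    n ≤ (admissibleIndices n j).card + 4 := by
  have hsub : Finset.range n ⊆ admissibleIndices n j ∪ ({j, third n j j} ∪
      (Finset.range n).filter fun k ↦ third n j k = k) := by
    intro k hk
    have hkn := Finset.mem_range.mp hk
    simp only [mem_admissibleIndices, Finset.mem_union, Finset.mem_filter, Finset.mem_insert,
      Finset.mem_singleton, hk, hkn, true_and]
    by_cases hlj : third n j k = j
    · have : third n j j = k :=
        (third_eq_iff hkn).mpr (by rwa [third_eq_iff hj, add_right_comm] at hlj)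
      tauto
    tauto
  calc n = (Finset.range n).card := (Finset.card_range n).symm
    _ ≤ _ := Finset.card_le_card hsub
    _ ≤ _ := Finset.card_union_le _ _
    _ ≤ (admissibleIndices n j).card + (2 + 2) := by
      gcongr
      exact (Finset.card_union_le _ _).trans
        (add_le_add Finset.card_le_two (card_filter_third_eq_self_le_two j))

theorem TriplePts_inter_Bline_finite {j : ℕ} (hj : j < n) :
    (TriplePts n ∩ Bline n j).Finite := by
  have hsub : TriplePts n ∩ Bline n j ⊆ ⋃ i ∈ {i | i < n ∧ i ≠ j}, Bline n i ∩ Bline n j := by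
    rintro z ⟨hz, hzj⟩
    obtain ⟨i, ⟨hi, hzi⟩, hij⟩ :=
      Set.exists_ne_of_one_lt_ncard (lt_of_lt_of_le (by norm_num) hz) j
    exact Set.mem_biUnion ⟨hi, hij⟩ ⟨hzi, hzj⟩
  refine (((Set.finite_Iio n).subset fun i hi ↦ hi.1).biUnion fun i hi ↦ ?_).subset hsub
  exact (Bline_inter_subsingleton hi.1 hj hi.2).finite

theorem card_admissibleIndices_le {j : ℕ} (hj : j < n) :
    (admissibleIndices n j).card ≤ 2 * (TriplePts n ∩ Bline n j).ncard := by
  classical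
  have hfiber : ∀ p ∈ (admissibleIndices n j).image (boroczkyPoint n j),
      ((admissibleIndices n j).filter (boroczkyPoint n j · = p)).card ≤ 2 := by
    simp only [Finset.mem_image]
    rintro _ ⟨k₂, hk₂, rfl⟩
    refine (Finset.card_le_card fun k hk ↦ ?_).trans
      (Finset.card_le_two (a := k₂) (b := third n j k₂))
    rw [Finset.mem_filter] at hk
    simpa using eq_or_eq_third_of_boroczkyPoint_eq
      (mem_admissibleIndices.mp hk.1).1 (mem_admissibleIndices.mp hk₂).1 hk.2
  have himage :
      ↑((admissibleIndices n j).image (boroczkyPoint n j)) ⊆ TriplePts n ∩ Bline n j := by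
    simp only [Finset.coe_image, Set.image_subset_iff]
    intro k hk
    obtain ⟨hkn, hkj, hlj, hlk⟩ := mem_admissibleIndices.mp hk
    exact ⟨boroczkyPoint_mem_TriplePts hj hkn hkj hlj hlk, boroczkyPoint_mem_Bline j k⟩
  calc (admissibleIndices n j).card
      ≤ 2 * ((admissibleIndices n j).image (boroczkyPoint n j)).card :=
        Finset.card_le_mul_card_image _ 2 hfiber
    _ ≤ 2 * (TriplePts n ∩ Bline n j).ncard := by
        rw [← Set.ncard_coe_finset]
        exact Nat.mul_le_mul_left 2
          (Set.ncard_le_ncard himage (TriplePts_inter_Bline_finite hj))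

end Boroczky

open Boroczky in
theorem boroczky_points_on_line'_general (n : ℕ) (hn : 14 ≤ n) :
    ∀ j, j < n →
      (TriplePts n ∩ Bline n j).Finite ∧ n / 3 + 1 ≤ (TriplePts n ∩ Bline n j).ncard := by
  intro j hj
  have : NeZero n := ⟨by omega⟩
  have hadm := le_card_admissibleIndices_add_four hj
  have hcount := card_admissibleIndices_le hj
  exact ⟨TriplePts_inter_Bline_finite hj, by omega⟩

/-- For even `n ≥ 14`, every line of the Böröczky configuration contains at
least `⌊n/3⌋ + 1` triple points. -/
theorem boroczky_points_on_line' (n : ℕ) (hn : 14 ≤ n) (heven : Even n) :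
    ∀ j, j < n →
      (TriplePts n ∩ Bline n j).Finite ∧ n / 3 + 1 ≤ (TriplePts n ∩ Bline n j).ncard :=
  boroczky_points_on_line'_general n hn
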